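/- Let r ≥ 2 and Δ ≥ 1 be integers and set t = r³Δ³. Then for any ε ≤ |P^{(r)}(Δ)|^{−1}·(t−1)^{−1} and any F ∈ F^{(r)}(n,Δ), there exists a partition of V(F) into X_0 ∪ X_1 ∪ … ∪ X_t (some X_i possibly empty) such that: (i) |X_t| = εn and X_0 = N_F(X_t); (ii) every x ∈ X_t has the same profile P_F(x) up to equivalence; and (iii) X_i is 3-independent in F for every i = 1,…,t. -/
import Mathlib

open Finset Filter Asymptotics
open scoped Classical

def maxDeg {V : Type*} [Fintype V] [DecidableEq V] (H : Finset (Finset V)) : ℕ :=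
  Finset.univ.sup (fun v => (H.filter (fun e => v ∈ e)).card)

def UniformH {V : Type*} (r : ℕ) (H : Finset (Finset V)) : Prop := ∀ e ∈ H, e.card = r

def hAdj {n : ℕ} (F : Finset (Finset (Fin n))) (u v : Fin n) : Prop :=
  ∃ e ∈ F, u ∈ e ∧ v ∈ e

def nbhd {n : ℕ} (F : Finset (Finset (Fin n))) (x : Fin n) : Finset (Fin n) :=
  Finset.univ.filter (fun w => w ≠ x ∧ ∃ e ∈ F, x ∈ e ∧ w ∈ e)

def nbhdSet {n : ℕ} (F : Finset (Finset (Fin n))) (W : Finset (Fin n)) : Finset (Fin n) :=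
  W.biUnion (nbhd F)

def profileOf {n : ℕ} (F : Finset (Finset (Fin n))) (x : Fin n) :
    Finset (Fin n) × Finset (Finset (Fin n)) × Finset (Finset (Fin n)) :=
  (nbhd F x, F.filter (fun e => e ⊆ nbhd F x),
    (F.filter (fun e => x ∈ e)).image (fun e => e.erase x))

def ProfEquiv {α β : Type*} [DecidableEq α] [DecidableEq β]
    (P : Finset α × Finset (Finset α) × Finset (Finset α))
    (Q : Finset β × Finset (Finset β) × Finset (Finset β)) : Prop :=
  ∃ φ : α → β, Set.InjOn φ ↑P.1 ∧ P.1.image φ = Q.1 ∧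
    P.2.1.image (fun e => e.image φ) = Q.2.1 ∧
    P.2.2.image (fun e => e.image φ) = Q.2.2

def IsRealizableProfile (r Δ : ℕ)
    (P : Finset (Fin ((r - 1) * Δ + 1)) × Finset (Finset (Fin ((r - 1) * Δ + 1))) ×
      Finset (Finset (Fin ((r - 1) * Δ + 1)))) : Prop :=
  ∃ (F : Finset (Finset (Fin ((r - 1) * Δ + 1)))) (x : Fin ((r - 1) * Δ + 1)),
    UniformH r F ∧ maxDeg F ≤ Δ ∧ profileOf F x = P

noncomputable def numProfiles (r Δ : ℕ) : ℕ :=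
  Nat.card (Quot (fun P Q : {P // IsRealizableProfile r Δ P} => ProfEquiv P.val Q.val))

def ThreeIndep {n : ℕ} (F : Finset (Finset (Fin n))) (W : Finset (Fin n)) : Prop :=
  ∀ u ∈ W, ∀ v ∈ W, u ≠ v →
    ¬ ∃ a b : Fin n, hAdj F u a ∧ hAdj F a b ∧ hAdj F b v

/-! ### Auxiliary lemmas -/

def near3 {n : ℕ} (F : Finset (Finset (Fin n))) (u v : Fin n) : Prop :=
  ∃ a b : Fin n, hAdj F u a ∧ hAdj F a b ∧ hAdj F b v

lemma hAdj_symm' {n : ℕ} {F : Finset (Finset (Fin n))} {u v : Fin n} (h : hAdj F u v) :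
    hAdj F v u := by
  obtain ⟨e, he, h1, h2⟩ := h; exact ⟨e, he, h2, h1⟩

lemma near3_symm' {n : ℕ} {F : Finset (Finset (Fin n))} {u v : Fin n} (h : near3 F u v) :
    near3 F v u := by
  obtain ⟨a, b, h1, h2, h3⟩ := h
  exact ⟨b, a, hAdj_symm' h3, hAdj_symm' h2, hAdj_symm' h1⟩

lemma deg_le' {n : ℕ} {Δ : ℕ} {F : Finset (Finset (Fin n))} (hdeg : maxDeg F ≤ Δ) (x : Fin n) :
    (F.filter (fun e => x ∈ e)).card ≤ Δ := by
  have h := Finset.le_sup (f := fun v : Fin n => (F.filter (fun e => v ∈ e)).card)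
    (Finset.mem_univ x)
  exact le_trans h hdeg

lemma nbhd_card_le' (r Δ : ℕ) {n : ℕ} (F : Finset (Finset (Fin n)))
    (hunif : UniformH r F) (hdeg : maxDeg F ≤ Δ) (x : Fin n) :
    (nbhd F x).card ≤ (r - 1) * Δ := by
  have hsub : nbhd F x ⊆ (F.filter (fun e => x ∈ e)).biUnion (fun e => e.erase x) := by
    intro w hw
    simp only [nbhd, Finset.mem_filter, Finset.mem_univ, true_and] at hw
    obtain ⟨hwx, e, he, hxe, hwe⟩ := hw
    exact Finset.mem_biUnion.2 ⟨e, Finset.mem_filter.2 ⟨he, hxe⟩, Finset.mem_erase.2 ⟨hwx, hwe⟩⟩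
  calc (nbhd F x).card ≤ _ := Finset.card_le_card hsub
    _ ≤ ∑ e ∈ F.filter (fun e => x ∈ e), (e.erase x).card := Finset.card_biUnion_le
    _ ≤ ∑ _e ∈ F.filter (fun e => x ∈ e), (r - 1) := by
        apply Finset.sum_le_sum
        intro e he
        rw [Finset.mem_filter] at he
        have h1 := hunif e he.1
        have h2 : (e.erase x).card = r - 1 := by rw [Finset.card_erase_of_mem he.2, h1]
        omega
    _ = (F.filter (fun e => x ∈ e)).card * (r - 1) := by rw [Finset.sum_const, smul_eq_mul]
    _ ≤ Δ * (r - 1) := Nat.mul_le_mul_right _ (deg_le' hdeg x)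
    _ = (r - 1) * Δ := Nat.mul_comm _ _

lemma nbhdSet_card_le' (r Δ : ℕ) {n : ℕ} (F : Finset (Finset (Fin n)))
    (hunif : UniformH r F) (hdeg : maxDeg F ≤ Δ) (W : Finset (Fin n)) :
    (nbhdSet F W).card ≤ W.card * ((r - 1) * Δ) := by
  calc (nbhdSet F W).card ≤ ∑ w ∈ W, (nbhd F w).card := Finset.card_biUnion_le
    _ ≤ ∑ _w ∈ W, ((r - 1) * Δ) := Finset.sum_le_sum (fun w _ => nbhd_card_le' r Δ F hunif hdeg w)
    _ = W.card * ((r - 1) * Δ) := by rw [Finset.sum_const, smul_eq_mul]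

def ball3 {n : ℕ} (F : Finset (Finset (Fin n))) (v : Fin n) : Finset (Fin n) :=
  insert v (nbhdSet F (insert v (nbhdSet F (insert v (nbhd F v)))))

lemma hAdj_mem' {n : ℕ} {F : Finset (Finset (Fin n))} {u a : Fin n} (h : hAdj F u a) :
    a ∈ insert u (nbhd F u) := by
  by_cases hau : a = u
  · rw [hau]; exact Finset.mem_insert_self _ _
  · obtain ⟨e, he, h1, h2⟩ := h
    refine Finset.mem_insert_of_mem ?_
    simp only [nbhd, Finset.mem_filter, Finset.mem_univ, true_and]
    exact ⟨hau, e, he, h1, h2⟩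

lemma near3_mem_ball3 {n : ℕ} {F : Finset (Finset (Fin n))} {u v : Fin n}
    (h : near3 F v u) : u ∈ ball3 F v := by
  obtain ⟨a, b, h1, h2, h3⟩ := h
  have hsub : ∀ {W W' : Finset (Fin n)}, W ⊆ W' → nbhdSet F W ⊆ nbhdSet F W' := by
    intro W W' hW z hz
    obtain ⟨w, hw, hz'⟩ := Finset.mem_biUnion.1 hz
    exact Finset.mem_biUnion.2 ⟨w, hW hw, hz'⟩
  have h12 : insert v (nbhd F v) ⊆ insert v (nbhdSet F (insert v (nbhd F v))) := by
    intro z hz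
    rcases Finset.mem_insert.1 hz with h' | h'
    · rw [h']; exact Finset.mem_insert_self _ _
    · exact Finset.mem_insert_of_mem
        (Finset.mem_biUnion.2 ⟨v, Finset.mem_insert_self _ _, h'⟩)
  have h23 : insert v (nbhdSet F (insert v (nbhd F v))) ⊆
      insert v (nbhdSet F (insert v (nbhdSet F (insert v (nbhd F v))))) := by
    intro z hz
    rcases Finset.mem_insert.1 hz with h' | h'
    · rw [h']; exact Finset.mem_insert_self _ _
    · exact Finset.mem_insert_of_mem (hsub h12 h')
  have haB1 : a ∈ insert v (nbhd F v) := hAdj_mem' h1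
  have hbB2 : b ∈ insert v (nbhdSet F (insert v (nbhd F v))) := by
    rcases Finset.mem_insert.1 (hAdj_mem' h2) with h' | h'
    · rw [h']; exact h12 haB1
    · exact Finset.mem_insert_of_mem (Finset.mem_biUnion.2 ⟨a, haB1, h'⟩)
  rcases Finset.mem_insert.1 (hAdj_mem' h3) with h' | h'
  · rw [h']; exact h23 hbB2
  · exact Finset.mem_insert_of_mem (Finset.mem_biUnion.2 ⟨b, hbB2, h'⟩)

lemma ball3_card_le' (r Δ : ℕ) {n : ℕ} {F : Finset (Finset (Fin n))}
    (hunif : UniformH r F) (hdeg : maxDeg F ≤ Δ) (v : Fin n) :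
    (ball3 F v).card ≤
      1 + (1 + (1 + (r - 1) * Δ) * ((r - 1) * Δ)) * ((r - 1) * Δ) := by
  have h1 : (insert v (nbhd F v)).card ≤ 1 + (r - 1) * Δ := by
    have := Finset.card_insert_le v (nbhd F v)
    have := nbhd_card_le' r Δ F hunif hdeg v
    omega
  have h2 : (insert v (nbhdSet F (insert v (nbhd F v)))).card ≤
      1 + (1 + (r - 1) * Δ) * ((r - 1) * Δ) := by
    have ha := Finset.card_insert_le v (nbhdSet F (insert v (nbhd F v)))
    have hb := nbhdSet_card_le' r Δ F hunif hdeg (insert v (nbhd F v))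
    have hc := Nat.mul_le_mul_right ((r - 1) * Δ) h1
    omega
  have h3 := Finset.card_insert_le v
    (nbhdSet F (insert v (nbhdSet F (insert v (nbhd F v)))))
  have h4 := nbhdSet_card_le' r Δ F hunif hdeg (insert v (nbhdSet F (insert v (nbhd F v))))
  have h5 := Nat.mul_le_mul_right ((r - 1) * Δ) h2
  simp only [ball3]
  omega

lemma arith_ball (r Δ : ℕ) (hr : 2 ≤ r) (hΔ : 1 ≤ Δ) :
    1 + (1 + (1 + (r - 1) * Δ) * ((r - 1) * Δ)) * ((r - 1) * Δ) ≤ r ^ 3 * Δ ^ 3 - 2 := by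
  have hd : 1 ≤ (r - 1) * Δ := by
    have : 1 * 1 ≤ (r - 1) * Δ := Nat.mul_le_mul (by omega) hΔ
    omega
  have hm : (r - 1) * Δ + 1 ≤ r * Δ := by
    have h1 : (r - 1) * Δ + Δ = r * Δ := by
      have : r - 1 + 1 = r := by omega
      calc (r - 1) * Δ + Δ = (r - 1 + 1) * Δ := by ring
        _ = r * Δ := by rw [this]
    omega
  have hcube : ((r - 1) * Δ + 1) ^ 3 ≤ (r * Δ) ^ 3 := Nat.pow_le_pow_left hm 3
  have ht : (r * Δ) ^ 3 = r ^ 3 * Δ ^ 3 := mul_pow r Δ 3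
  set d := (r - 1) * Δ with hdd
  have key : 1 + (1 + (1 + d) * d) * d + 2 ≤ (d + 1) ^ 3 := by nlinarith [hd]
  have h5 : (d + 1) ^ 3 ≤ r ^ 3 * Δ ^ 3 := by rw [← ht]; exact hcube
  exact Nat.le_sub_of_add_le (le_trans key h5)

lemma profEquiv_refl' {α : Type*} [DecidableEq α]
    (P : Finset α × Finset (Finset α) × Finset (Finset α)) : ProfEquiv P P :=
  ⟨id, Set.injOn_id _, by simp, by simp, by simp⟩

lemma profEquiv_trans' {α β γ : Type*} [DecidableEq α] [DecidableEq β] [DecidableEq γ]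
    {P : Finset α × Finset (Finset α) × Finset (Finset α)}
    {Q : Finset β × Finset (Finset β) × Finset (Finset β)}
    {R : Finset γ × Finset (Finset γ) × Finset (Finset γ)}
    (h1 : ProfEquiv P Q) (h2 : ProfEquiv Q R) : ProfEquiv P R := by
  obtain ⟨φ, hinj, ha, hb, hc⟩ := h1
  obtain ⟨φ', hinj', ha', hb', hc'⟩ := h2
  have hcomp : ∀ (s : Finset (Finset α)), s.image (fun e => e.image (φ' ∘ φ)) =
      (s.image (fun e => e.image φ)).image (fun e => e.image φ') := by
    intro s
    rw [Finset.image_image]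
    apply Finset.image_congr
    intro e _
    exact (Finset.image_image).symm
  refine ⟨φ' ∘ φ, hinj'.comp hinj ?_, ?_, ?_, ?_⟩
  · intro a haP
    rw [← ha]
    exact Finset.mem_coe.2 (Finset.mem_image_of_mem φ (Finset.mem_coe.1 haP))
  · rw [← Finset.image_image, ha, ha']
  · rw [hcomp, hb, hb']
  · rw [hcomp, hc, hc']

lemma profEquiv_symm' {α β : Type*} [DecidableEq α] [DecidableEq β] [Nonempty α]
    {P : Finset α × Finset (Finset α) × Finset (Finset α)}
    {Q : Finset β × Finset (Finset β) × Finset (Finset β)}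
    (hP1 : ∀ e ∈ P.2.1, e ⊆ P.1) (hP2 : ∀ e ∈ P.2.2, e ⊆ P.1)
    (h : ProfEquiv P Q) : ProfEquiv Q P := by
  obtain ⟨φ, hinj, ha, hb, hc⟩ := h
  set ψ := Function.invFunOn φ ↑P.1 with hψ
  have hlv : ∀ a ∈ P.1, ψ (φ a) = a := fun a ha' =>
    hinj.leftInvOn_invFunOn (Finset.mem_coe.2 ha')
  have him : ∀ e : Finset α, e ⊆ P.1 → (e.image φ).image ψ = e := by
    intro e he
    rw [Finset.image_image]
    have h1 : Finset.image (ψ ∘ φ) e = Finset.image id e :=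
      Finset.image_congr (fun a ha' => hlv a (he (Finset.mem_coe.1 ha')))
    rw [h1, Finset.image_id]
  refine ⟨ψ, ?_, ?_, ?_, ?_⟩
  · rw [← ha]
    intro u hu v hv huv
    rw [Finset.coe_image] at hu hv
    obtain ⟨a, haP, rfl⟩ := hu
    obtain ⟨b, hbP, rfl⟩ := hv
    rw [hlv a haP, hlv b hbP] at huv
    rw [huv]
  · rw [← ha, him P.1 (Finset.Subset.refl _)]
  · rw [← hb, Finset.image_image]
    have h1 : Finset.image ((fun e => Finset.image ψ e) ∘ (fun e => Finset.image φ e)) P.2.1 =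
        Finset.image id P.2.1 :=
      Finset.image_congr (fun e he => him e (hP1 e (Finset.mem_coe.1 he)))
    rw [h1, Finset.image_id]
  · rw [← hc, Finset.image_image]
    have h1 : Finset.image ((fun e => Finset.image ψ e) ∘ (fun e => Finset.image φ e)) P.2.2 =
        Finset.image id P.2.2 :=
      Finset.image_congr (fun e he => him e (hP2 e (Finset.mem_coe.1 he)))
    rw [h1, Finset.image_id]

lemma profile_edges' {n : ℕ} (F : Finset (Finset (Fin n))) (x : Fin n) :
    (∀ e ∈ (profileOf F x).2.1, e ⊆ (profileOf F x).1) ∧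
    (∀ e ∈ (profileOf F x).2.2, e ⊆ (profileOf F x).1) := by
  constructor
  · intro e he
    exact (Finset.mem_filter.1 he).2
  · intro e he
    simp only [profileOf, Finset.mem_image, Finset.mem_filter] at he
    obtain ⟨e', ⟨he', hx⟩, rfl⟩ := he
    intro z hz
    rw [Finset.mem_erase] at hz
    simp only [profileOf, nbhd, Finset.mem_filter, Finset.mem_univ, true_and]
    exact ⟨hz.1, e', he', hx, hz.2⟩

lemma rel_equiv' (r Δ : ℕ) :
    Equivalence (fun P Q : {P // IsRealizableProfile r Δ P} => ProfEquiv P.val Q.val) := by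
  constructor
  · intro P; exact profEquiv_refl' _
  · intro P Q h
    obtain ⟨F, x, -, -, hP⟩ := P.2
    have hpe := profile_edges' F x
    rw [hP] at hpe
    exact profEquiv_symm' hpe.1 hpe.2 h
  · intro _ _ _ h1 h2; exact profEquiv_trans' h1 h2

lemma exists_realizable' (r Δ : ℕ) {n : ℕ}
    (F : Finset (Finset (Fin n))) (hunif : UniformH r F) (hdeg : maxDeg F ≤ Δ) (x : Fin n) :
    ∃ P : {P // IsRealizableProfile r Δ P}, ProfEquiv (profileOf F x) P.val := by
  classical
  set S : Finset (Fin n) := insert x (nbhd F x) with hSdef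
  have hxS : x ∈ S := Finset.mem_insert_self _ _
  have hnS : nbhd F x ⊆ S := Finset.subset_insert _ _
  have hcard : S.card ≤ (r - 1) * Δ + 1 := by
    have h1 := nbhd_card_le' r Δ F hunif hdeg x
    have h2 : S.card ≤ (nbhd F x).card + 1 := by
      rw [hSdef]; exact Finset.card_insert_le _ _
    omega
  obtain ⟨emb⟩ : Nonempty (↥S ↪ Fin ((r - 1) * Δ + 1)) := by
    rw [Function.Embedding.nonempty_iff_card_le, Fintype.card_coe, Fintype.card_fin]
    exact hcard
  set ψ : Fin n → Fin ((r - 1) * Δ + 1) :=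
    fun v => if h : v ∈ S then emb ⟨v, h⟩ else ⟨0, Nat.succ_pos _⟩ with hψdef
  have hψS : ∀ v (h : v ∈ S), ψ v = emb ⟨v, h⟩ := fun v h => dif_pos h
  have hinj : Set.InjOn ψ ↑S := by
    intro a ha b hb hab
    rw [Finset.mem_coe] at ha hb
    rw [hψS a ha, hψS b hb] at hab
    exact Subtype.mk_eq_mk.1 (emb.injective hab)
  have hmem : ∀ {a : Fin n} {e : Finset (Fin n)}, a ∈ S → e ⊆ S →
      (ψ a ∈ e.image ψ ↔ a ∈ e) := by
    intro a e ha he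
    constructor
    · intro h
      obtain ⟨u, hu, huv⟩ := Finset.mem_image.1 h
      rwa [hinj (he hu) ha huv] at hu
    · exact fun h => Finset.mem_image_of_mem _ h
  have hsubs : ∀ {e t : Finset (Fin n)}, e ⊆ S → t ⊆ S →
      (e.image ψ ⊆ t.image ψ ↔ e ⊆ t) := by
    intro e t he ht
    constructor
    · intro h z hz
      have h2 := h (Finset.mem_image_of_mem ψ hz)
      obtain ⟨u, hu, huv⟩ := Finset.mem_image.1 h2
      rwa [hinj (ht hu) (he hz) huv] at hu
    · exact fun h => Finset.image_subset_image h
  have herase : ∀ {e : Finset (Fin n)}, e ⊆ S →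
      (e.image ψ).erase (ψ x) = (e.erase x).image ψ := by
    intro e he
    ext w
    simp only [Finset.mem_erase, Finset.mem_image]
    constructor
    · rintro ⟨hw, u, hu, rfl⟩
      exact ⟨u, ⟨fun h => hw (by rw [h]), hu⟩, rfl⟩
    · rintro ⟨u, ⟨hux, hu⟩, rfl⟩
      exact ⟨fun h => hux (hinj (he hu) hxS h), u, hu, rfl⟩
  have hedge : ∀ {e : Finset (Fin n)}, e ∈ F → x ∈ e → e ⊆ S := by
    intro e he hx z hz
    by_cases h : z = x
    · rw [h]; exact hxS
    · refine hnS ?_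
      simp only [nbhd, Finset.mem_filter, Finset.mem_univ, true_and]
      exact ⟨h, e, he, hx, hz⟩
  set F' : Finset (Finset (Fin ((r - 1) * Δ + 1))) :=
    (F.filter (fun e => e ⊆ S)).image (fun e => e.image ψ) with hF'def
  have hF'mem : ∀ {e' : Finset (Fin ((r - 1) * Δ + 1))},
      e' ∈ F' ↔ ∃ e, e ∈ F ∧ e ⊆ S ∧ e' = e.image ψ := by
    intro e'
    simp only [hF'def, Finset.mem_image, Finset.mem_filter]
    constructor
    · rintro ⟨e, ⟨he, hes⟩, rfl⟩; exact ⟨e, he, hes, rfl⟩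
    · rintro ⟨e, he, hes, rfl⟩; exact ⟨e, ⟨he, hes⟩, rfl⟩
  have hunif' : UniformH r F' := by
    intro e' he'
    obtain ⟨e, he, hes, rfl⟩ := hF'mem.1 he'
    rw [Finset.card_image_of_injOn (hinj.mono (Finset.coe_subset.2 hes))]
    exact hunif e he
  have hdeg' : maxDeg F' ≤ Δ := by
    apply Finset.sup_le
    intro w _
    by_cases hw : ∃ v ∈ S, ψ v = w
    · obtain ⟨v, hv, rfl⟩ := hw
      have hsub : F'.filter (fun e => ψ v ∈ e) ⊆
          (F.filter (fun e => v ∈ e)).image (fun e => e.image ψ) := by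
        intro e' he'
        rw [Finset.mem_filter] at he'
        obtain ⟨e, he, hes, rfl⟩ := hF'mem.1 he'.1
        exact Finset.mem_image_of_mem _ (Finset.mem_filter.2 ⟨he, (hmem hv hes).1 he'.2⟩)
      calc (F'.filter (fun e => ψ v ∈ e)).card
          ≤ ((F.filter (fun e => v ∈ e)).image (fun e => e.image ψ)).card :=
            Finset.card_le_card hsub
        _ ≤ (F.filter (fun e => v ∈ e)).card := Finset.card_image_le
        _ ≤ Δ := deg_le' hdeg v
    · have hempty : F'.filter (fun e => w ∈ e) = ∅ := by
        rw [Finset.filter_eq_empty_iff]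
        intro e' he' hmem'
        obtain ⟨e, he, hes, rfl⟩ := hF'mem.1 he'
        obtain ⟨u, hu, rfl⟩ := Finset.mem_image.1 hmem'
        exact hw ⟨u, hes hu, rfl⟩
      rw [hempty, Finset.card_empty]
      exact Nat.zero_le Δ
  have hA : nbhd F' (ψ x) = (nbhd F x).image ψ := by
    ext w
    simp only [nbhd, Finset.mem_filter, Finset.mem_univ, true_and, Finset.mem_image]
    constructor
    · rintro ⟨hwx, e', he', hxe', hwe'⟩
      obtain ⟨e, he, hes, rfl⟩ := hF'mem.1 he'
      have hxe : x ∈ e := (hmem hxS hes).1 hxe'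
      obtain ⟨u, hu, rfl⟩ := Finset.mem_image.1 hwe'
      have hux : u ≠ x := fun h => hwx (by rw [h])
      exact ⟨u, ⟨hux, e, he, hxe, hu⟩, rfl⟩
    · rintro ⟨u, ⟨hux, e, he, hxe, hue⟩, rfl⟩
      have hes := hedge he hxe
      have huS : u ∈ S := hes hue
      refine ⟨fun h => hux (hinj (Finset.mem_coe.2 huS) (Finset.mem_coe.2 hxS) h),
        e.image ψ, hF'mem.2 ⟨e, he, hes, rfl⟩, (hmem hxS hes).2 hxe,
        Finset.mem_image_of_mem _ hue⟩
  have hB2 : F'.filter (fun e => e ⊆ nbhd F' (ψ x)) =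
      (F.filter (fun e => e ⊆ nbhd F x)).image (fun e => e.image ψ) := by
    ext e'
    simp only [Finset.mem_filter, Finset.mem_image]
    constructor
    · rintro ⟨he', hsubn⟩
      obtain ⟨e, he, hes, rfl⟩ := hF'mem.1 he'
      rw [hA] at hsubn
      exact ⟨e, ⟨he, (hsubs hes hnS).1 hsubn⟩, rfl⟩
    · rintro ⟨e, ⟨he, hesub⟩, rfl⟩
      have hes : e ⊆ S := hesub.trans hnS
      refine ⟨hF'mem.2 ⟨e, he, hes, rfl⟩, ?_⟩
      rw [hA]
      exact Finset.image_subset_image hesub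
  have hC2 : F'.filter (fun e => ψ x ∈ e) =
      (F.filter (fun e => x ∈ e)).image (fun e => e.image ψ) := by
    ext e'
    simp only [Finset.mem_filter, Finset.mem_image]
    constructor
    · rintro ⟨he', hx'⟩
      obtain ⟨e, he, hes, rfl⟩ := hF'mem.1 he'
      exact ⟨e, ⟨he, (hmem hxS hes).1 hx'⟩, rfl⟩
    · rintro ⟨e, ⟨he, hx'⟩, rfl⟩
      have hes := hedge he hx'
      exact ⟨hF'mem.2 ⟨e, he, hes, rfl⟩, (hmem hxS hes).2 hx'⟩
  have hD : (F'.filter (fun e => ψ x ∈ e)).image (fun e => e.erase (ψ x)) =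
      ((F.filter (fun e => x ∈ e)).image (fun e => e.erase x)).image
        (fun e => e.image ψ) := by
    rw [hC2, Finset.image_image, Finset.image_image]
    apply Finset.image_congr
    intro e he
    rw [Finset.mem_coe, Finset.mem_filter] at he
    show (e.image ψ).erase (ψ x) = (e.erase x).image ψ
    exact herase (hedge he.1 he.2)
  have hreal : IsRealizableProfile r Δ (profileOf F' (ψ x)) := ⟨F', ψ x, hunif', hdeg', rfl⟩
  refine ⟨⟨profileOf F' (ψ x), hreal⟩, ψ, hinj.mono (Finset.coe_subset.2 hnS), ?_, ?_, ?_⟩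
  · exact hA.symm
  · exact hB2.symm
  · exact hD.symm

lemma exists_indep_subset' {α : Type*} [DecidableEq α] (P : α → α → Prop)
    (hsym : ∀ u v, P u v → P v u) (ball : α → Finset α)
    (hball : ∀ v u, P v u → u ∈ ball v) (hself : ∀ v, v ∈ ball v) (B : ℕ) (hB1 : 1 ≤ B)
    (hB : ∀ v, (ball v).card ≤ B) :
    ∀ (k : ℕ) (C : Finset α), k * B ≤ C.card →
      ∃ T, T ⊆ C ∧ T.card = k ∧ ∀ u ∈ T, ∀ v ∈ T, u ≠ v → ¬ P u v := by
  intro k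
  induction k with
  | zero => exact fun C _ => ⟨∅, Finset.empty_subset _, rfl, by simp⟩
  | succ k ih =>
    intro C hC
    have hCne : C.Nonempty := by
      rw [← Finset.card_pos]
      have : 1 ≤ (k + 1) * B := by nlinarith
      omega
    obtain ⟨v, hv⟩ := hCne
    have hsd : k * B ≤ (C \ ball v).card := by
      have h1 : C.card ≤ (C \ ball v).card + (ball v).card :=
        Finset.card_le_card_sdiff_add_card
      have h2 := hB v
      have h3 : (k + 1) * B = k * B + B := by ring
      omega
    obtain ⟨T', hT'sub, hT'card, hT'pair⟩ := ih (C \ ball v) hsd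
    have hvT' : v ∉ T' := by
      intro h
      exact (Finset.mem_sdiff.1 (hT'sub h)).2 (hself v)
    refine ⟨insert v T', ?_, ?_, ?_⟩
    · refine Finset.insert_subset hv (hT'sub.trans ?_)
      exact Finset.sdiff_subset
    · rw [Finset.card_insert_of_notMem hvT', hT'card]
    · intro u hu w hw huw
      rcases Finset.mem_insert.1 hu with rfl | hu' <;>
        rcases Finset.mem_insert.1 hw with rfl | hw'
      · exact absurd rfl huw
      · intro hP
        exact (Finset.mem_sdiff.1 (hT'sub hw')).2 (hball u w hP)
      · intro hP
        exact (Finset.mem_sdiff.1 (hT'sub hu')).2 (hball w u (hsym u w hP))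
      · exact hT'pair u hu' w hw' huw

lemma exists_coloring' {α : Type*} [DecidableEq α] (P : α → α → Prop)
    (hsym : ∀ u v, P u v → P v u) (ball : α → Finset α)
    (hball : ∀ v u, P v u → u ∈ ball v) (B Cc : ℕ) (hB : ∀ v, (ball v).card ≤ B)
    (hBC : B < Cc) (S : Finset α) :
    ∃ c : α → ℕ, (∀ v ∈ S, c v ∈ Finset.Icc 1 Cc) ∧
      ∀ u ∈ S, ∀ v ∈ S, u ≠ v → P u v → c u ≠ c v := by
  classical
  induction S using Finset.induction_on with
  | empty => exact ⟨fun _ => 1, by simp, by simp⟩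
  | @insert a S' ha ih =>
    obtain ⟨c, hc1, hc2⟩ := ih
    have hforb : ((ball a).image c).card ≤ B := le_trans Finset.card_image_le (hB a)
    have hne : (Finset.Icc 1 Cc \ (ball a).image c).Nonempty := by
      rw [← Finset.card_pos]
      have h1 : (Finset.Icc 1 Cc).card ≤
          (Finset.Icc 1 Cc \ (ball a).image c).card + ((ball a).image c).card :=
        Finset.card_le_card_sdiff_add_card
      have h2 : (Finset.Icc 1 Cc).card = Cc := by
        rw [Nat.card_Icc]; omega
      omega
    obtain ⟨j, hj⟩ := hne
    rw [Finset.mem_sdiff] at hj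
    refine ⟨Function.update c a j, ?_, ?_⟩
    · intro v hv
      rcases Finset.mem_insert.1 hv with rfl | hv'
      · rw [Function.update_self]; exact hj.1
      · rw [Function.update_of_ne (ne_of_mem_of_not_mem hv' ha)]
        exact hc1 v hv'
    · intro u hu v hv huv hP
      rcases Finset.mem_insert.1 hu with rfl | hu' <;>
        rcases Finset.mem_insert.1 hv with rfl | hv'
      · exact absurd rfl huv
      · rw [Function.update_self, Function.update_of_ne (ne_of_mem_of_not_mem hv' ha)]
        intro h
        exact hj.2 (h ▸ Finset.mem_image_of_mem c (hball u v hP))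
      · rw [Function.update_self, Function.update_of_ne (ne_of_mem_of_not_mem hu' ha)]
        intro h
        exact hj.2 (h ▸ Finset.mem_image_of_mem c (hball v u (hsym u v hP)))
      · rw [Function.update_of_ne (ne_of_mem_of_not_mem hu' ha),
          Function.update_of_ne (ne_of_mem_of_not_mem hv' ha)]
        exact hc2 u hu' v hv' huv hP

theorem partition_lemma (r Δ : ℕ) (hr : 2 ≤ r) (hΔ : 1 ≤ Δ) (n : ℕ)
    (ε : ℝ) (hε0 : 0 < ε)
    (hε : ε ≤ ((numProfiles r Δ : ℝ))⁻¹ * (((r ^ 3 * Δ ^ 3 - 1 : ℕ) : ℝ))⁻¹)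
    (F : Finset (Finset (Fin n))) (hunif : UniformH r F) (hdeg : maxDeg F ≤ Δ) :
    ∃ X : ℕ → Finset (Fin n),
      (∀ i ≤ r ^ 3 * Δ ^ 3, ∀ j ≤ r ^ 3 * Δ ^ 3, i ≠ j → Disjoint (X i) (X j)) ∧
      (Finset.range (r ^ 3 * Δ ^ 3 + 1)).biUnion X = Finset.univ ∧
      (X (r ^ 3 * Δ ^ 3)).card = ⌊ε * n⌋₊ ∧
      X 0 = nbhdSet F (X (r ^ 3 * Δ ^ 3)) ∧
      (∀ x ∈ X (r ^ 3 * Δ ^ 3), ∀ y ∈ X (r ^ 3 * Δ ^ 3),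
        ProfEquiv (profileOf F x) (profileOf F y)) ∧
      (∀ i, 1 ≤ i → i ≤ r ^ 3 * Δ ^ 3 → ThreeIndep F (X i)) := by
  classical
  set t := r ^ 3 * Δ ^ 3 with htdef
  have h8 : 8 ≤ t := by
    have h1 : 2 ^ 3 ≤ r ^ 3 := Nat.pow_le_pow_left hr 3
    have h2 : 1 ≤ Δ ^ 3 := Nat.one_le_pow _ _ hΔ
    calc (8 : ℕ) = 2 ^ 3 * 1 := by norm_num
      _ ≤ r ^ 3 * Δ ^ 3 := Nat.mul_le_mul h1 h2
  set k := ⌊ε * (n : ℝ)⌋₊ with hkdef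
  set p := numProfiles r Δ with hpdef
  -- ball facts
  have hballcard : ∀ v : Fin n, (ball3 F v).card ≤ t - 2 :=
    fun v => le_trans (ball3_card_le' r Δ hunif hdeg v) (arith_ball r Δ hr hΔ)
  have hballmem : ∀ v u : Fin n, near3 F v u → u ∈ ball3 F v := fun v u h => near3_mem_ball3 h
  have hballself : ∀ v : Fin n, v ∈ ball3 F v := fun v => Finset.mem_insert_self _ _
  -- profile classification
  have hreal := fun x : Fin n => exists_realizable' r Δ F hunif hdeg x
  set g : Fin n → Quot (fun P Q : {P // IsRealizableProfile r Δ P} =>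
      ProfEquiv P.val Q.val) := fun x => Quot.mk _ (hreal x).choose with hgdef
  have hg : ∀ x y : Fin n, g x = g y → ProfEquiv (profileOf F x) (profileOf F y) := by
    intro x y hxy
    haveI : Nonempty (Fin n) := ⟨x⟩
    have h1 := (hreal x).choose_spec
    have h2 := (hreal y).choose_spec
    have h3 : ProfEquiv (hreal x).choose.val (hreal y).choose.val :=
      ((rel_equiv' r Δ).eqvGen_iff).1 (Quot.eq.1 hxy)
    have hpe := profile_edges' F y
    have h2' : ProfEquiv (hreal y).choose.val (profileOf F y) :=
      profEquiv_symm' hpe.1 hpe.2 h2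
    exact profEquiv_trans' h1 (profEquiv_trans' h3 h2')
  -- obtain the set T
  obtain ⟨T, hTcard, hTpair, hTprof⟩ :
      ∃ T : Finset (Fin n), T.card = k ∧
        (∀ u ∈ T, ∀ v ∈ T, u ≠ v → ¬ near3 F u v) ∧
        (∀ x ∈ T, ∀ y ∈ T, ProfEquiv (profileOf F x) (profileOf F y)) := by
    by_cases hk0 : k = 0
    · exact ⟨∅, by simp [hk0], by simp, by simp⟩
    · -- pigeonhole
      have hn0 : 0 < n := by
        by_contra hn
        have : n = 0 := by omega
        rw [this] at hkdef
        simp at hkdef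
        exact hk0 hkdef
      haveI : Nonempty (Fin n) := ⟨⟨0, hn0⟩⟩
      haveI hfinQ : Finite (Quot (fun P Q : {P // IsRealizableProfile r Δ P} =>
          ProfEquiv P.val Q.val)) :=
        Finite.of_surjective (Quot.mk _) (fun q => Quot.exists_rep q)
      haveI := Fintype.ofFinite (Quot (fun P Q : {P // IsRealizableProfile r Δ P} =>
          ProfEquiv P.val Q.val))
      have himg : (Finset.univ.image g).card ≤ p := by
        rw [hpdef, numProfiles, Nat.card_eq_fintype_card]
        exact le_trans (Finset.card_le_univ _) (le_of_eq (Finset.card_univ))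
      have himgne : (Finset.univ.image g).Nonempty :=
        Finset.Nonempty.image Finset.univ_nonempty g
      obtain ⟨q, hq, hMq⟩ := Finset.exists_mem_eq_sup (Finset.univ.image g) himgne
        (fun b => (Finset.univ.filter (fun x => g x = b)).card)
      set C := Finset.univ.filter (fun x => g x = q) with hCdef
      have hsum : n = ∑ b ∈ Finset.univ.image g,
          (Finset.univ.filter (fun x => g x = b)).card := by
        have h0 : (Finset.univ : Finset (Fin n)).card = ∑ b ∈ Finset.univ.image g,
            (Finset.univ.filter (fun x => g x = b)).card :=
          Finset.card_eq_sum_card_fiberwise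
            (fun x _ => Finset.mem_image_of_mem g (Finset.mem_univ x))
        rwa [Finset.card_univ, Fintype.card_fin] at h0
      have hnle : n ≤ p * C.card := by
        have h1 : ∀ b ∈ Finset.univ.image g,
            (Finset.univ.filter (fun x => g x = b)).card ≤ C.card := by
          intro b hb
          rw [← hMq]
          exact Finset.le_sup (f := fun b => (Finset.univ.filter (fun x => g x = b)).card) hb
        calc n = _ := hsum
          _ ≤ (Finset.univ.image g).card * C.card := by
              have := Finset.sum_le_card_nsmul (Finset.univ.image g)
                (fun b => (Finset.univ.filter (fun x => g x = b)).card) C.card h1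
              simpa [smul_eq_mul] using this
          _ ≤ p * C.card := Nat.mul_le_mul_right _ himg
      -- real arithmetic : k * (t-1) ≤ C.card
      have hp0 : 0 < p := by
        by_contra hp
        have hp' : p = 0 := by omega
        rw [hp'] at hε
        simp at hε
        linarith
      have ht1 : (0 : ℕ) < t - 1 := by omega
      have hkr : (k : ℝ) ≤ ε * n := Nat.floor_le (by positivity)
      have hone : ε * ((p : ℝ) * ((t - 1 : ℕ) : ℝ)) ≤ 1 := by
        have hp' : (0 : ℝ) < (p : ℝ) := by exact_mod_cast hp0
        have ht' : (0 : ℝ) < ((t - 1 : ℕ) : ℝ) := by exact_mod_cast ht1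
        calc ε * ((p : ℝ) * ((t - 1 : ℕ) : ℝ))
            ≤ ((p : ℝ)⁻¹ * ((t - 1 : ℕ) : ℝ)⁻¹) * ((p : ℝ) * ((t - 1 : ℕ) : ℝ)) := by
              apply mul_le_mul_of_nonneg_right hε (by positivity)
          _ = 1 := by
              rw [show ((p : ℝ)⁻¹ * (((t - 1 : ℕ) : ℝ))⁻¹) * ((p : ℝ) * ((t - 1 : ℕ) : ℝ)) =
                ((p : ℝ)⁻¹ * (p : ℝ)) * ((((t - 1 : ℕ) : ℝ))⁻¹ * ((t - 1 : ℕ) : ℝ)) from by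
                  ring, inv_mul_cancel₀ hp'.ne', inv_mul_cancel₀ ht'.ne', one_mul]
      have h2r : (k : ℝ) * ((t - 1 : ℕ) : ℝ) * (p : ℝ) ≤ (n : ℝ) := by
        have hstep : (k : ℝ) * ((t - 1 : ℕ) : ℝ) * (p : ℝ) ≤
            (ε * n) * ((t - 1 : ℕ) : ℝ) * (p : ℝ) := by
          apply mul_le_mul_of_nonneg_right _ (by positivity)
          apply mul_le_mul_of_nonneg_right hkr (by positivity)
        calc (k : ℝ) * ((t - 1 : ℕ) : ℝ) * (p : ℝ) ≤ _ := hstep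
          _ = (ε * ((p : ℝ) * ((t - 1 : ℕ) : ℝ))) * (n : ℝ) := by ring
          _ ≤ 1 * (n : ℝ) := mul_le_mul_of_nonneg_right hone (by positivity)
          _ = (n : ℝ) := one_mul _
      have hknat : k * (t - 1) * p ≤ n := by exact_mod_cast h2r
      have hkC : k * (t - 1) ≤ C.card := by
        have h1 : k * (t - 1) * p ≤ C.card * p := by
          calc k * (t - 1) * p ≤ n := hknat
            _ ≤ p * C.card := hnle
            _ = C.card * p := Nat.mul_comm _ _
        exact Nat.le_of_mul_le_mul_right h1 hp0
      have hkB : k * (t - 2) ≤ C.card :=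
        le_trans (Nat.mul_le_mul_left _ (by omega)) hkC
      obtain ⟨T, hTsub, hTcard, hTpair⟩ := exists_indep_subset' (near3 F)
        (fun u v h => near3_symm' h) (ball3 F) hballmem hballself (t - 2) (by omega)
        hballcard k C hkB
      refine ⟨T, hTcard, hTpair, ?_⟩
      intro x hx y hy
      apply hg
      have hx' := (Finset.mem_filter.1 (hTsub hx)).2
      have hy' := (Finset.mem_filter.1 (hTsub hy)).2
      rw [hx', hy']
  -- coloring of the rest
  have hTX0 : ∀ a ∈ T, a ∉ nbhdSet F T := by
    intro a haT hins
    obtain ⟨y, hyT, hy⟩ := Finset.mem_biUnion.1 hins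
    simp only [nbhd, Finset.mem_filter, Finset.mem_univ, true_and] at hy
    obtain ⟨hay, e, he, hye, hae⟩ := hy
    exact hTpair y hyT a haT (Ne.symm hay)
      ⟨y, y, ⟨e, he, hye, hye⟩, ⟨e, he, hye, hye⟩, ⟨e, he, hye, hae⟩⟩
  set R : Finset (Fin n) := Finset.univ \ (T ∪ nbhdSet F T) with hRdef
  obtain ⟨c, hc1, hc2⟩ := exists_coloring' (near3 F) (fun u v h => near3_symm' h)
    (ball3 F) hballmem (t - 2) (t - 1) hballcard (by omega) R
  -- define the partition
  set Xf : ℕ → Finset (Fin n) := fun i =>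
    if i = t then T else if i = 0 then nbhdSet F T
    else R.filter (fun v => c v = i) with hXfdef
  have hXft : Xf t = T := by
    show (if t = t then T else if t = 0 then nbhdSet F T
      else R.filter (fun v => c v = t)) = T
    rw [if_pos rfl]
  have hXf0 : Xf 0 = nbhdSet F T := by
    show (if 0 = t then T else if 0 = 0 then nbhdSet F T
      else R.filter (fun v => c v = 0)) = nbhdSet F T
    rw [if_neg (by omega : ¬ (0 = t)), if_pos rfl]
  have hXfmid : ∀ i, i ≠ 0 → i ≠ t → Xf i = R.filter (fun v => c v = i) := by
    intro i h0 ht'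
    show (if i = t then T else if i = 0 then nbhdSet F T
      else R.filter (fun v => c v = i)) = R.filter (fun v => c v = i)
    rw [if_neg ht', if_neg h0]
  have hmemcase : ∀ i, ∀ a : Fin n, a ∈ Xf i →
      (i = t ∧ a ∈ T) ∨ (i = 0 ∧ a ∈ nbhdSet F T) ∨
      (i ≠ t ∧ i ≠ 0 ∧ a ∈ R ∧ c a = i) := by
    intro i a ha
    by_cases h1 : i = t
    · left; rw [h1, hXft] at ha; exact ⟨h1, ha⟩
    by_cases h2 : i = 0
    · right; left; rw [h2, hXf0] at ha; exact ⟨h2, ha⟩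
    · right; right
      rw [hXfmid i h2 h1, Finset.mem_filter] at ha
      exact ⟨h1, h2, ha.1, ha.2⟩
  refine ⟨Xf, ?_, ?_, ?_, ?_, ?_, ?_⟩
  · -- disjointness
    intro i hi j hj hij
    rw [Finset.disjoint_left]
    intro a hai haj
    have hcase1 := hmemcase i a hai
    have hcase2 := hmemcase j a haj
    rcases hcase1 with ⟨hi', haT⟩ | ⟨hi', haN⟩ | ⟨hi1, hi2, haR, hci⟩ <;>
      rcases hcase2 with ⟨hj', haT'⟩ | ⟨hj', haN'⟩ | ⟨hj1, hj2, haR', hcj⟩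
    · exact hij (by omega)
    · exact hTX0 a haT haN'
    · exact (Finset.mem_sdiff.1 haR').2 (Finset.mem_union_left _ haT)
    · exact hTX0 a haT' haN
    · exact hij (by omega)
    · exact (Finset.mem_sdiff.1 haR').2 (Finset.mem_union_right _ haN)
    · exact (Finset.mem_sdiff.1 haR).2 (Finset.mem_union_left _ haT')
    · exact (Finset.mem_sdiff.1 haR).2 (Finset.mem_union_right _ haN')
    · exact hij (by omega)
  · -- cover
    apply Finset.eq_univ_of_forall
    intro v
    rw [Finset.mem_biUnion]
    by_cases hvT : v ∈ T
    · exact ⟨t, Finset.mem_range.2 (by omega), by rw [hXft]; exact hvT⟩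
    by_cases hvN : v ∈ nbhdSet F T
    · exact ⟨0, Finset.mem_range.2 (by omega), by rw [hXf0]; exact hvN⟩
    · have hvR : v ∈ R := by
        rw [hRdef, Finset.mem_sdiff]
        refine ⟨Finset.mem_univ v, ?_⟩
        rw [Finset.mem_union]
        tauto
      have hcv := hc1 v hvR
      rw [Finset.mem_Icc] at hcv
      refine ⟨c v, Finset.mem_range.2 (by omega), ?_⟩
      rw [hXfmid (c v) (by omega) (by omega)]
      exact Finset.mem_filter.2 ⟨hvR, rfl⟩
  · rw [hXft]; exact hTcard
  · rw [hXft, hXf0]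
  · rw [hXft]; exact hTprof
  · intro i h1 h2
    by_cases hit : i = t
    · rw [hit, hXft]
      exact fun u hu v hv huv => hTpair u hu v hv huv
    · rw [hXfmid i (by omega) hit]
      intro u hu v hv huv hnear
      rw [Finset.mem_filter] at hu hv
      exact hc2 u hu.1 v hv.1 huv hnear (by rw [hu.2, hv.2])
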